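/- arXiv:nlin/0010016 — 8 statements merged into one kernel-verified Lean document; each statement's English description precedes it below -/
import Mathlib

section
/- Let A be a commutative, not necessarily associative, algebra over a field k, and let B be a symmetric bilinear form on A satisfying the Frobenius condition. Then the quadrilinear form B([a,b,c], d) has the pair-interchange symmetry of an algebraic curvature tensor: B([a,b,c], d) = B([c,d,a], b) for all a, b, c, d ∈ A. -/
/-- The associator `[a,b,c] = (a∘b)∘c − a∘(b∘c)` of a (bilinear) multiplication. -/
def assoc3 {k A : Type*} [Field k] [AddCommGroup A] [Module k A]
    (mul : A →ₗ[k] A →ₗ[k] A) (a b c : A) : A :=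
  mul (mul a b) c - mul a (mul b c)

/-- In a commutative, not necessarily associative, algebra over a field
with a symmetric bilinear form `B` satisfying the Frobenius condition, the
quadrilinear form `B([a,b,c], d)` has the pair-interchange symmetry of an algebraic
curvature tensor: `B([a,b,c], d) = B([c,d,a], b)`. -/
theorem assoc_pair_interchange
    {k A : Type*} [Field k] [AddCommGroup A] [Module k A]
    (mul : A →ₗ[k] A →ₗ[k] A) (hcomm : ∀ a b : A, mul a b = mul b a)
    (B : A →ₗ[k] A →ₗ[k] k) (hsymm : ∀ a b : A, B a b = B b a)
    (hfrob : ∀ a b c : A, B (mul a b) c = B a (mul b c)) :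
    ∀ a b c d : A, B (assoc3 mul a b c) d = B (assoc3 mul c d a) b := by
  intro a b c d
  have key : ∀ x y z w : A, B (mul (mul x y) z) w = B (mul x y) (mul z w) := by
    intro x y z w; rw [hfrob]
  simp only [assoc3, map_sub, LinearMap.sub_apply]
  rw [key, key]
  rw [hcomm a (mul b c), key, hcomm c (mul d a), key]
  rw [hsymm (mul c d) (mul a b), hcomm a b, hcomm d a]
  rw [hsymm (mul b c) (mul a d), hcomm a d, hcomm b c]
end

section
/- Let A be a commutative, not necessarily associative, algebra over a field k, and let B be a symmetric bilinear form on A satisfying the Frobenius condition. Then for all u, v, w ∈ A: B([v,u,w], u) = 0. (This expresses the vanishing of the obstructions to the existence of the conserved densities h^(2) and h^(3) of the dispersionless KdV system u_t = u∘u_x.) -/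
/-- In a commutative, not necessarily associative, algebra over a field
with a symmetric bilinear form `B` satisfying the Frobenius condition, one has
`B([v,u,w], u) = 0` for all `u, v, w` (vanishing of the obstructions to the
existence of the conserved densities `h⁽²⁾` and `h⁽³⁾`). -/
theorem obstruction_h2_h3_vanishes
    {k A : Type*} [Field k] [AddCommGroup A] [Module k A]
    (mul : A →ₗ[k] A →ₗ[k] A) (hcomm : ∀ a b : A, mul a b = mul b a)
    (B : A →ₗ[k] A →ₗ[k] k) (hsymm : ∀ a b : A, B a b = B b a)
    (hfrob : ∀ a b c : A, B (mul a b) c = B a (mul b c)) :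
    ∀ u v w : A, B (assoc3 mul v u w) u = 0 := by
  intro u v w
  have h1 : B (mul (mul v u) w) u = B (mul v u) (mul w u) := hfrob _ _ _
  have h2 : B (mul v (mul u w)) u = B (mul v u) (mul w u) := by
    rw [hcomm v (mul u w), hfrob, hcomm u w, hsymm, hfrob]
  simp [assoc3, h1, h2]
end

section
/- Let A be a commutative, not necessarily associative, algebra over a field k, and let B be a nondegenerate symmetric bilinear form on A satisfying the Frobenius condition. Then the obstruction B([v,u,w], u∘u) vanishes for all u, v, w ∈ A if and only if A is a Jordan algebra, i.e. (a∘b)∘(a∘a) = a∘(b∘(a∘a)) for all a, b ∈ A. (This is the statement that the conserved density h^(4) of the dispersionless KdV system u_t = u∘u_x exists if and only if A is Jordan.) -/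
/-- In a commutative, not necessarily associative, algebra over a field
with a nondegenerate symmetric bilinear form `B` satisfying the Frobenius condition,
the obstruction `B([v,u,w], u∘u)` vanishes for all `u, v, w` iff the algebra is
Jordan — i.e. the conserved density `h⁽⁴⁾` exists iff the algebra is Jordan. -/
theorem h4_exists_iff_jordan
    {k A : Type*} [Field k] [AddCommGroup A] [Module k A]
    (mul : A →ₗ[k] A →ₗ[k] A) (hcomm : ∀ a b : A, mul a b = mul b a)
    (B : A →ₗ[k] A →ₗ[k] k) (hsymm : ∀ a b : A, B a b = B b a)
    (hfrob : ∀ a b c : A, B (mul a b) c = B a (mul b c))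
    (hnd : ∀ x : A, (∀ y : A, B x y = 0) → x = 0) :
    (∀ u v w : A, B (assoc3 mul v u w) (mul u u) = 0) ↔
      (∀ a b : A, mul (mul a b) (mul a a) = mul a (mul b (mul a a))) := by
  have key : ∀ u v w : A, B (assoc3 mul v u w) (mul u u)
      = B v (mul u (mul w (mul u u)) - mul (mul u w) (mul u u)) := by
    intro u v w
    simp only [assoc3, map_sub, LinearMap.sub_apply]
    rw [hfrob, hfrob, hfrob]
  constructor
  · intro h a b
    have : ∀ v : A, B (mul a (mul b (mul a a)) - mul (mul a b) (mul a a)) v = 0 := by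
      intro v
      rw [hsymm, ← key a v b]
      exact h a v b
    exact (sub_eq_zero.mp (hnd _ this)).symm
  · intro h u v w
    rw [key, h u w, sub_self, map_zero]
end

section
/- Let A be a commutative, not necessarily associative, algebra over a field k of characteristic 0, and let B be a nondegenerate symmetric bilinear form on A satisfying the Frobenius condition. Then A is a Jordan algebra (i.e. (a∘b)∘(a∘a) = a∘(b∘(a∘a)) for all a, b) if and only if all the obstructions vanish: for every n ≥ 1 and all u, v, w ∈ A, B([v,u,w], u^n) = 0, where u^1 = u and u^(n+1) = u∘u^n. (This is the statement that the full hierarchy of hydrodynamic conserved densities h^(n) of the dispersionless KdV system u_t = u∘u_x exists for all n if and only if A is Jordan.) -/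
/-- Left powers: `u^1 = u`, `u^(n+1) = u ∘ u^n` (the value at `0` is junk). -/
def lpow {k A : Type*} [Field k] [AddCommGroup A] [Module k A]
    (mul : A →ₗ[k] A →ₗ[k] A) (u : A) : ℕ → A
  | 0 => 0
  | 1 => u
  | (n + 2) => mul u (lpow mul u (n + 1))

section Aux

set_option linter.unusedSectionVars false

variable {k A : Type*} [Field k] [CharZero k] [AddCommGroup A] [Module k A]
variable (mul : A →ₗ[k] A →ₗ[k] A)

/-- The commutator of left multiplications, evaluated pointwise. -/
def Cop (a b w : A) : A := mul a (mul b w) - mul b (mul a w)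

lemma Cop_skew (a b w : A) : Cop mul a b w = - Cop mul b a w := by
  simp [Cop]

lemma lpow_one (u : A) : lpow mul u 1 = u := rfl

lemma lpow_succ (u : A) (n : ℕ) (h : 1 ≤ n) :
    lpow mul u (n + 1) = mul u (lpow mul u n) := by
  rcases n with _ | m
  · omega
  · rfl

lemma jordan_H (hcomm : ∀ a b : A, mul a b = mul b a)
    (hJ : ∀ a b : A, mul (mul a b) (mul a a) = mul a (mul b (mul a a))) (x w : A) :
    Cop mul x (mul x x) w = 0 := by
  have h := hJ x w
  rw [Cop, hcomm (mul x x) (mul x w), hcomm w (mul x x)] at *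
  rw [h]; abel

lemma jordan_Q (hcomm : ∀ a b : A, mul a b = mul b a)
    (hJ : ∀ a b : A, mul (mul a b) (mul a a) = mul a (mul b (mul a a))) (a b w : A) :
    (2:k) • Cop mul a (mul a b) w + Cop mul b (mul a a) w = 0 := by
  have h1 := jordan_H mul hcomm hJ (a + b) w
  have h2 := jordan_H mul hcomm hJ (a - b) w
  have h3 := jordan_H mul hcomm hJ b w
  have hab := hcomm a b
  simp only [Cop, map_add, map_sub, LinearMap.add_apply, LinearMap.sub_apply] at h1 h2 h3 ⊢
  rw [hab] at *
  linear_combination (norm := module) ((2:k)⁻¹) • (h1 - h2) - h3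

lemma jordan_lin (hcomm : ∀ a b : A, mul a b = mul b a)
    (hJ : ∀ a b : A, mul (mul a b) (mul a a) = mul a (mul b (mul a a))) (a b c w : A) :
    Cop mul a (mul b c) w + Cop mul b (mul c a) w + Cop mul c (mul a b) w = 0 := by
  have h1 := jordan_Q mul hcomm hJ (a + c) b w
  have h2 := jordan_Q mul hcomm hJ a b w
  have h3 := jordan_Q mul hcomm hJ c b w
  simp only [Cop, map_add, map_sub, LinearMap.add_apply, LinearMap.sub_apply, smul_add,
    smul_sub] at h1 h2 h3 ⊢
  rw [hcomm c b, hcomm c a] at *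
  have key : (2:k) • (mul a (mul (mul b c) w) - mul (mul b c) (mul a w)
      + (mul b (mul (mul a c) w) - mul (mul a c) (mul b w))
      + (mul c (mul (mul a b) w) - mul (mul a b) (mul c w))) = 0 := by
    linear_combination (norm := module) h1 - h2 - h3
  have h2ne : (2:k) ≠ 0 := two_ne_zero
  have key2 := (smul_eq_zero.mp key).resolve_left h2ne
  linear_combination (norm := module) key2

lemma main_ind (hcomm : ∀ a b : A, mul a b = mul b a)
    (hJ : ∀ a b : A, mul (mul a b) (mul a a) = mul a (mul b (mul a a))) (u : A) :
    ∀ n : ℕ,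
      (∀ i j, 1 ≤ i → 1 ≤ j → i + j = n →
        mul (lpow mul u i) (lpow mul u j) = lpow mul u n) ∧
      (∀ i j, 1 ≤ i → 1 ≤ j → i + j = n → ∀ w : A,
        Cop mul (lpow mul u i) (lpow mul u j) w = 0) := by
  intro n
  induction n using Nat.strong_induction_on with
  | _ n ih =>
  have hpow : ∀ i j, 1 ≤ i → 1 ≤ j → i + j = n →
      mul (lpow mul u i) (lpow mul u j) = lpow mul u n := by
    intro i j hi hj hij
    rcases j with _ | _ | m
    · omega
    · -- j = 1
      rw [← hij, lpow_succ mul u i hi, lpow_one]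
      exact hcomm _ _
    · -- j = m + 2
      subst hij
      have e1 : lpow mul u (m + 2) = mul u (lpow mul u (m + 1)) := rfl
      have hc := (ih (i + 1) (by omega)).2 i 1 hi le_rfl rfl (lpow mul u (m + 1))
      rw [lpow_one] at hc
      simp only [Cop] at hc
      have hc' := sub_eq_zero.mp hc
      have hp := (ih (i + (m + 1)) (by omega)).1 i (m + 1) hi (by omega) rfl
      rw [e1, hc', hp]
      have : i + (m + 2) = (i + (m + 1)) + 1 := by omega
      rw [this, lpow_succ mul u (i + (m + 1)) (by omega)]
  refine ⟨hpow, ?_⟩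
  intro i j hi hj hij w
  obtain ⟨m, rfl⟩ : ∃ m, n = m + 1 := ⟨n - 1, by omega⟩
  have hm : 1 ≤ m := by omega
  -- step relation from the linearized Jordan identity
  have step : ∀ p q, 1 ≤ p → 1 ≤ q → p + q + 1 = m + 1 →
      Cop mul (lpow mul u p) (lpow mul u (q + 1)) w
        + Cop mul (lpow mul u q) (lpow mul u (p + 1)) w
        + Cop mul u (lpow mul u m) w = 0 := by
    intro p q hp hq hpq
    have hl := jordan_lin mul hcomm hJ (lpow mul u p) (lpow mul u q) u w
    have e1 : mul (lpow mul u q) u = lpow mul u (q + 1) := by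
      have := (ih (q + 1) (by omega)).1 q 1 hq le_rfl rfl
      rwa [lpow_one] at this
    have e2 : mul u (lpow mul u p) = lpow mul u (p + 1) := by
      have := (ih (p + 1) (by omega)).1 1 p le_rfl hp (by omega)
      rwa [lpow_one] at this
    have e3 : mul (lpow mul u p) (lpow mul u q) = lpow mul u m :=
      (ih m (by omega)).1 p q hp hq (by omega)
    rw [e1, e2, e3] at hl
    exact hl
  have lem : ∀ i, 1 ≤ i → ∀ j, 1 ≤ j → i + j = m + 1 →
      Cop mul (lpow mul u i) (lpow mul u j) w
        = (i : k) • Cop mul u (lpow mul u m) w := by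
    intro i
    induction i with
    | zero => intro h; omega
    | succ i ihi =>
      intro _ j hj hij
      rcases Nat.eq_zero_or_pos i with h0 | hpos
      · subst h0
        have hjm : j = m := by omega
        subst hjm
        rw [lpow_one]
        norm_num
      · have ihval := ihi hpos (j + 1) (by omega) (by omega)
        have hstep := step i j hpos hj (by omega)
        rw [ihval] at hstep
        rw [Cop_skew]
        push_cast
        linear_combination (norm := module) -hstep
  have hm1 := lem m hm 1 le_rfl (by omega)
  rw [lpow_one] at hm1
  rw [Cop_skew] at hm1
  have hz : ((m : k) + 1) • Cop mul u (lpow mul u m) w = 0 := by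
    linear_combination (norm := module) -hm1
  have hne : ((m : k) + 1) ≠ 0 := by
    have : ((m : k) + 1) = ((m + 1 : ℕ) : k) := by push_cast; ring
    rw [this]
    exact Nat.cast_ne_zero.mpr (by omega)
  have hc1 : Cop mul u (lpow mul u m) w = 0 :=
    (smul_eq_zero.mp hz).resolve_left hne
  rw [lem i hi j hj hij, hc1, smul_zero]

end Aux

/-- In a commutative, not necessarily associative, algebra over a field
of characteristic 0 with a nondegenerate symmetric bilinear form satisfying the
Frobenius condition, the algebra is Jordan iff all the obstructions vanish:
`B([v,u,w], uⁿ) = 0` for every `n ≥ 1` and all `u, v, w` — i.e. the full hierarchy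
of hydrodynamic conserved densities `h⁽ⁿ⁾` exists iff the algebra is Jordan. -/
theorem hierarchy_exists_iff_jordan
    {k A : Type*} [Field k] [CharZero k] [AddCommGroup A] [Module k A]
    (mul : A →ₗ[k] A →ₗ[k] A) (hcomm : ∀ a b : A, mul a b = mul b a)
    (B : A →ₗ[k] A →ₗ[k] k) (hsymm : ∀ a b : A, B a b = B b a)
    (hfrob : ∀ a b c : A, B (mul a b) c = B a (mul b c))
    (hnd : ∀ x : A, (∀ y : A, B x y = 0) → x = 0) :
    (∀ a b : A, mul (mul a b) (mul a a) = mul a (mul b (mul a a))) ↔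
      (∀ n : ℕ, 1 ≤ n → ∀ u v w : A, B (assoc3 mul v u w) (lpow mul u n) = 0) := by
  constructor
  · intro hJ n hn u v w
    have hc := (main_ind mul hcomm hJ u (n + 1)).2 n 1 hn le_rfl rfl w
    rw [lpow_one] at hc
    simp only [Cop] at hc
    have hc' := sub_eq_zero.mp hc
    -- B(assoc3 v u w, uⁿ) = B(v, u(w uⁿ) - (u w) uⁿ)
    rw [assoc3, map_sub, LinearMap.sub_apply, hfrob, hfrob, hfrob]
    rw [sub_eq_zero]
    congr 1
    rw [hcomm w (lpow mul u n), hcomm (mul u w) (lpow mul u n)]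
    exact hc'.symm
  · intro h a b
    have key : ∀ v w : A,
        B v (mul a (mul w (mul a a)) - mul (mul a w) (mul a a)) = 0 := by
      intro v w
      have h2 := h 2 (by norm_num) a v w
      have hl2 : lpow mul a 2 = mul a a := rfl
      rw [assoc3, hl2, map_sub, LinearMap.sub_apply, hfrob, hfrob, hfrob] at h2
      rw [map_sub]
      exact h2
    have hz : mul a (mul b (mul a a)) - mul (mul a b) (mul a a) = 0 := by
      apply hnd
      intro y
      rw [hsymm]
      exact key y b
    have := sub_eq_zero.mp hz
    rw [this]
end

section
/- In the algebra D_N (N ≥ 2), for all indices 2 ≤ i, j ≤ N and every element u = Σ_k u^k e_k, the associator satisfies [e_i, u, e_j] = u^j e_i − u^i e_j; moreover [e_1, u, e_j] = 0 and [e_i, u, e_1] = 0 for all j, i. -/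
/-- The multiplication of the algebra `D_N` on `Fin N → ℝ` (basis `e_1, …, e_N`
identified with the indices `0, …, N-1`): it is the commutative bilinear product
determined by `e_1∘e_i = e_i` for all `i`, `e_i∘e_i = −e_1` for `i ≥ 2`, and
`e_i∘e_j = 0` for distinct `i, j ≥ 2`. -/
def dmul {N : ℕ} (hN : 0 < N) (u v : Fin N → ℝ) : Fin N → ℝ := fun i =>
  if i = (⟨0, hN⟩ : Fin N) then
    u ⟨0, hN⟩ * v ⟨0, hN⟩ - ∑ j : Fin N, (if j = (⟨0, hN⟩ : Fin N) then 0 else u j * v j)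
  else
    u ⟨0, hN⟩ * v i + u i * v ⟨0, hN⟩

/-- The associator `[a,b,c] = (a∘b)∘c − a∘(b∘c)` in `D_N`. -/
def dassoc {N : ℕ} (hN : 0 < N) (a b c : Fin N → ℝ) : Fin N → ℝ :=
  dmul hN (dmul hN a b) c - dmul hN a (dmul hN b c)

lemma dmul_comm {N : ℕ} (hN : 0 < N) (u v : Fin N → ℝ) :
    dmul hN u v = dmul hN v u := by
  funext k
  simp only [dmul]
  split_ifs
  · ring_nf
    congr 1
    apply Finset.sum_congr rfl
    intro x _
    split_ifs <;> ring
  · ring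

lemma dmul_e0_left {N : ℕ} (hN : 0 < N) (v : Fin N → ℝ) :
    dmul hN (Pi.single (⟨0, hN⟩ : Fin N) 1) v = v := by
  funext k
  simp only [dmul]
  by_cases hk : k = (⟨0, hN⟩ : Fin N)
  · simp [hk, Pi.single_apply]
    exact Finset.sum_eq_zero fun x _ => by split_ifs <;> rfl
  · simp [hk, Pi.single_apply, Ne.symm hk]

lemma dmul_single_left {N : ℕ} (hN : 0 < N) (i : Fin N) (hi : i ≠ (⟨0, hN⟩ : Fin N))
    (v : Fin N → ℝ) :
    dmul hN (Pi.single i 1) v = v ⟨0, hN⟩ • (Pi.single i 1 : Fin N → ℝ)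
      - v i • (Pi.single (⟨0, hN⟩ : Fin N) 1 : Fin N → ℝ) := by
  have hsum : ∑ j : Fin N, (if j = (⟨0, hN⟩ : Fin N) then 0
      else (Pi.single i 1 : Fin N → ℝ) j * v j) = v i := by
    have h : ∀ j ∈ Finset.univ, (if j = (⟨0, hN⟩ : Fin N) then 0
        else (Pi.single i 1 : Fin N → ℝ) j * v j) = if j = i then v i else 0 := by
      intro j _
      by_cases hj : j = i
      · subst hj; simp [hi]
      · by_cases hj0 : j = (⟨0, hN⟩ : Fin N) <;>
          simp [hj, hj0, Pi.single_apply, Ne.symm hi]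
    rw [Finset.sum_congr rfl h, Finset.sum_ite_eq' Finset.univ i (fun _ => v i)]
    simp
  funext k
  simp only [dmul, Pi.sub_apply, Pi.smul_apply, smul_eq_mul]
  by_cases hk : k = (⟨0, hN⟩ : Fin N)
  · rw [if_pos hk, hsum, hk]
    simp [Pi.single_apply, hi, Ne.symm hi]
  · rw [if_neg hk]
    by_cases hki : k = i <;>
      simp [hki, Pi.single_apply, Ne.symm hi, hk, Ne.symm hk]

set_option maxRecDepth 8000 in
/-- In `D_N` (`N ≥ 2`), for basis vectors `e_i, e_j` with `i, j ≥ 2`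
(here: indices `≠ 0`, since `e_1` is the index-`0` basis vector) and any element
`u = Σ_k u^k e_k`, the associator satisfies `[e_i, u, e_j] = u^j e_i − u^i e_j`;
moreover `[e_1, u, e_j] = 0` and `[e_i, u, e_1] = 0` for all `j, i`. -/
theorem dN_associator (N : ℕ) (hN : 2 ≤ N) (i j : Fin N) (u : Fin N → ℝ) :
    (i ≠ (⟨0, by omega⟩ : Fin N) → j ≠ (⟨0, by omega⟩ : Fin N) →
      dassoc (by omega) (Pi.single i 1 : Fin N → ℝ) u (Pi.single j 1 : Fin N → ℝ)
        = u j • (Pi.single i 1 : Fin N → ℝ) - u i • (Pi.single j 1 : Fin N → ℝ)) ∧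
    dassoc (by omega) (Pi.single (⟨0, by omega⟩ : Fin N) 1 : Fin N → ℝ) u
        (Pi.single j 1 : Fin N → ℝ) = 0 ∧
    dassoc (by omega) (Pi.single i 1 : Fin N → ℝ) u
        (Pi.single (⟨0, by omega⟩ : Fin N) 1 : Fin N → ℝ) = 0 := by
  have h0 : 0 < N := by omega
  refine ⟨?_, ?_, ?_⟩
  · intro hi hj
    have hi' : i ≠ (⟨0, h0⟩ : Fin N) := hi
    have hj' : j ≠ (⟨0, h0⟩ : Fin N) := hj
    clear hi hj
    show dassoc h0 _ _ _ = _
    rw [dassoc, dmul_single_left h0 i hi',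
      dmul_comm h0 _ (Pi.single j 1), dmul_single_left h0 j hj',
      dmul_comm h0 u (Pi.single j 1), dmul_single_left h0 j hj',
      dmul_single_left h0 i hi']
    funext k
    simp only [Pi.sub_apply, Pi.smul_apply, smul_eq_mul, Pi.single_apply]
    split_ifs <;> subst_vars <;>
      first
        | ring1
        | (exact absurd rfl hi')
        | (exact absurd rfl hj')
        | (exact absurd rfl ‹_›)
  · show dassoc h0 _ _ _ = 0
    rw [dassoc, dmul_e0_left, dmul_e0_left, sub_self]
  · show dassoc h0 _ _ _ = 0
    rw [dassoc, dmul_comm h0 _ (Pi.single _ 1), dmul_e0_left,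
      dmul_comm h0 u (Pi.single _ 1), dmul_e0_left, sub_self]
end

section
/- Let A(α) be the three-dimensional commutative algebra over ℝ associated to the prepotential F = u³/6 + u(v²+w²)/2 + α₁v³/6 + α₂v²w/2 + α₃vw²/2 + α₄w³/6, and set Δ := α₂² − α₁α₃ + α₃² − α₂α₄ − 1. Then for every element x = x₁e₁ + x₂e₂ + x₃e₃ ∈ A(α), the associator satisfies [e₂, x, e₃] = Δ(x₃e₂ − x₂e₃), and [e_i, x, e_j] = 0 whenever {i,j} ≠ {2,3} (in particular whenever i = 1, j = 1, or i = j). -/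
/-- The multiplication of the three-dimensional commutative algebra `A(α)` on
`Fin 3 → ℝ` (basis `e₁, e₂, e₃` identified with the indices `0, 1, 2`), associated
to the prepotential `F = u³/6 + u(v²+w²)/2 + α₁v³/6 + α₂v²w/2 + α₃vw²/2 + α₄w³/6`:
`e₁` is a unity element, `e₂∘e₂ = e₁ + α₁e₂ + α₂e₃`, `e₂∘e₃ = α₂e₂ + α₃e₃`,
`e₃∘e₃ = e₁ + α₃e₂ + α₄e₃`. -/
def amul (α₁ α₂ α₃ α₄ : ℝ) (u v : Fin 3 → ℝ) : Fin 3 → ℝ :=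
  ![u 0 * v 0 + u 1 * v 1 + u 2 * v 2,
    u 0 * v 1 + u 1 * v 0 + α₁ * (u 1 * v 1) + α₂ * (u 1 * v 2 + u 2 * v 1)
      + α₃ * (u 2 * v 2),
    u 0 * v 2 + u 2 * v 0 + α₂ * (u 1 * v 1) + α₃ * (u 1 * v 2 + u 2 * v 1)
      + α₄ * (u 2 * v 2)]

/-- The associator `[a,b,c] = (a∘b)∘c − a∘(b∘c)` in `A(α)`. -/
def aassoc (α₁ α₂ α₃ α₄ : ℝ) (a b c : Fin 3 → ℝ) : Fin 3 → ℝ :=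
  amul α₁ α₂ α₃ α₄ (amul α₁ α₂ α₃ α₄ a b) c - amul α₁ α₂ α₃ α₄ a (amul α₁ α₂ α₃ α₄ b c)

/-- In `A(α)`, with `Δ = α₂² − α₁α₃ + α₃² − α₂α₄ − 1`, every element
`x = x₁e₁ + x₂e₂ + x₃e₃` satisfies `[e₂, x, e₃] = Δ(x₃e₂ − x₂e₃)`, and
`[e_i, x, e_j] = 0` whenever `{i, j} ≠ {2, 3}` (basis vectors `e₁, e₂, e₃` are the
indices `0, 1, 2`, so `{2, 3}` is the index set `{1, 2}`). -/
theorem aAlpha_associator (α₁ α₂ α₃ α₄ : ℝ) (x : Fin 3 → ℝ) :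
    (aassoc α₁ α₂ α₃ α₄ (Pi.single 1 1 : Fin 3 → ℝ) x (Pi.single 2 1 : Fin 3 → ℝ)
      = (α₂ ^ 2 - α₁ * α₃ + α₃ ^ 2 - α₂ * α₄ - 1) •
          (x 2 • (Pi.single 1 1 : Fin 3 → ℝ) - x 1 • (Pi.single 2 1 : Fin 3 → ℝ))) ∧
    (∀ i j : Fin 3, ({i, j} : Finset (Fin 3)) ≠ ({1, 2} : Finset (Fin 3)) →
      aassoc α₁ α₂ α₃ α₄ (Pi.single i 1 : Fin 3 → ℝ) x (Pi.single j 1 : Fin 3 → ℝ)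
        = 0) := by
  constructor
  · funext k
    fin_cases k <;>
      simp [aassoc, amul, Pi.single_apply, Matrix.cons_val_zero, Matrix.cons_val_one] <;> ring
  · intro i j h
    fin_cases i <;> fin_cases j <;>
      first
        | exact absurd (by decide) h
        | (funext k; fin_cases k <;>
            simp [aassoc, amul, Pi.single_apply] <;> ring)
end

section
/- The three-dimensional commutative algebra A(α) associated to the prepotential F = u³/6 + u(v²+w²)/2 + α₁v³/6 + α₂v²w/2 + α₃vw²/2 + α₄w³/6 is associative if and only if Δ := α₂² − α₁α₃ + α₃² − α₂α₄ − 1 = 0. -/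
/-- The algebra `A(α)` is associative iff
`Δ = α₂² − α₁α₃ + α₃² − α₂α₄ − 1 = 0`. -/
theorem aAlpha_associative_iff (α₁ α₂ α₃ α₄ : ℝ) :
    (∀ a b c : Fin 3 → ℝ,
        amul α₁ α₂ α₃ α₄ (amul α₁ α₂ α₃ α₄ a b) c
          = amul α₁ α₂ α₃ α₄ a (amul α₁ α₂ α₃ α₄ b c)) ↔
      α₂ ^ 2 - α₁ * α₃ + α₃ ^ 2 - α₂ * α₄ - 1 = 0 := by
  constructor
  · intro h
    have h2 := congrFun (h ![0,1,0] ![0,1,0] ![0,0,1]) 2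
    simp [amul] at h2
    linear_combination -h2
  · intro h a b c
    funext i
    fin_cases i <;> simp [amul]
    · ring
    · linear_combination (a 1 * b 2 * c 2 - a 2 * b 2 * c 1) * h
    · linear_combination (a 2 * b 1 * c 1 - a 1 * b 1 * c 2) * h
end

section
/- The three-dimensional commutative algebra A(α) associated to the prepotential F = u³/6 + u(v²+w²)/2 + α₁v³/6 + α₂v²w/2 + α₃vw²/2 + α₄w³/6 is a Jordan algebra (i.e. (a∘b)∘(a∘a) = a∘(b∘(a∘a)) for all a, b) if and only if either Δ := α₂² − α₁α₃ + α₃² − α₂α₄ − 1 = 0, or α₁ = α₂ = α₃ = α₄ = 0. -/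
set_option maxHeartbeats 2000000 in
/-- The algebra `A(α)` is a Jordan algebra iff either
`Δ = α₂² − α₁α₃ + α₃² − α₂α₄ − 1 = 0` or `α₁ = α₂ = α₃ = α₄ = 0`. -/
theorem aAlpha_jordan_iff (α₁ α₂ α₃ α₄ : ℝ) :
    (∀ a b : Fin 3 → ℝ,
        amul α₁ α₂ α₃ α₄ (amul α₁ α₂ α₃ α₄ a b) (amul α₁ α₂ α₃ α₄ a a)
          = amul α₁ α₂ α₃ α₄ a (amul α₁ α₂ α₃ α₄ b (amul α₁ α₂ α₃ α₄ a a))) ↔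
      (α₂ ^ 2 - α₁ * α₃ + α₃ ^ 2 - α₂ * α₄ - 1 = 0 ∨
        (α₁ = 0 ∧ α₂ = 0 ∧ α₃ = 0 ∧ α₄ = 0)) := by
  constructor
  · intro h
    rcases eq_or_ne (α₂ ^ 2 - α₁ * α₃ + α₃ ^ 2 - α₂ * α₄ - 1) 0 with hΔ | hΔ
    · exact Or.inl hΔ
    · refine Or.inr ?_
      have e1 := congrFun (h ![0, 1, 0] ![0, 0, 1]) 1
      have e2 := congrFun (h ![0, 0, 1] ![0, 0, 1]) 1
      have e3 := congrFun (h ![0, 1, 1] ![0, 0, 1]) 1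
      have e4 := congrFun (h ![0, 1, -1] ![0, 0, 1]) 1
      simp [amul] at e1 e2 e3 e4
      have h2 : α₂ * (α₂ ^ 2 - α₁ * α₃ + α₃ ^ 2 - α₂ * α₄ - 1) = 0 := by
        linear_combination e1
      have h3 : α₃ * (α₂ ^ 2 - α₁ * α₃ + α₃ ^ 2 - α₂ * α₄ - 1) = 0 := by
        linear_combination -e2
      have hq : α₂ = 0 := by
        rcases mul_eq_zero.mp h2 with h' | h'
        · exact h'
        · exact absurd h' hΔ
      have hr : α₃ = 0 := by
        rcases mul_eq_zero.mp h3 with h' | h'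
        · exact h'
        · exact absurd h' hΔ
      have h4 : (-α₁ - α₂ + α₃ + α₄) * (α₂ ^ 2 - α₁ * α₃ + α₃ ^ 2 - α₂ * α₄ - 1) = 0 := by
        linear_combination e3
      have h5 : (α₁ - α₂ - α₃ + α₄) * (α₂ ^ 2 - α₁ * α₃ + α₃ ^ 2 - α₂ * α₄ - 1) = 0 := by
        linear_combination e4
      have h4' : -α₁ - α₂ + α₃ + α₄ = 0 := by
        rcases mul_eq_zero.mp h4 with h' | h'
        · exact h'
        · exact absurd h' hΔ
      have h5' : α₁ - α₂ - α₃ + α₄ = 0 := by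
        rcases mul_eq_zero.mp h5 with h' | h'
        · exact h'
        · exact absurd h' hΔ
      refine ⟨by linarith, hq, hr, by linarith⟩
  · rintro (hΔ | ⟨h1, h2, h3, h4⟩) <;> intro a b <;> funext i <;> fin_cases i <;>
      simp [amul]
    · ring
    · linear_combination (b 2 * (-α₃ * (a 2) ^ 3 + (α₄ - 2 * α₂) * a 1 * (a 2) ^ 2
        + (2 * α₃ - α₁) * (a 1) ^ 2 * a 2 + α₂ * (a 1) ^ 3)) * hΔ
    · linear_combination (-(b 1) * (-α₃ * (a 2) ^ 3 + (α₄ - 2 * α₂) * a 1 * (a 2) ^ 2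
        + (2 * α₃ - α₁) * (a 1) ^ 2 * a 2 + α₂ * (a 1) ^ 3)) * hΔ
    · ring
    · subst h1 h2 h3 h4; ring
    · subst h1 h2 h3 h4; ring
end
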